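/- Let a₀ > 0 and u : [0,T] → ℝ absolutely continuous with u' + a₀u = F, F ∈ L¹(0,T). Then sup_{t∈[0,T]}|u(t)| + a₀∫₀ᵀ|u(t)|dt ≤ 2(|u(0)| + ∫₀ᵀ|F(t)|dt). -/

import Mathlib

open MeasureTheory Set

lemma exp_antideriv (a₀ : ℝ) (ha₀ : 0 < a₀) (t : ℝ) :
    HasDerivAt (fun t : ℝ => -(Real.exp (-(a₀*t)) / a₀)) (Real.exp (-(a₀*t))) t := by
  have h1 : HasDerivAt (fun t : ℝ => -(a₀*t)) (-a₀) t := by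
    simpa using ((hasDerivAt_id t).const_mul a₀).fun_neg
  have h4 := (h1.exp.div_const a₀).fun_neg
  refine h4.congr_deriv ?_
  field_simp

lemma exp_integral (a₀ : ℝ) (ha₀ : 0 < a₀) (a b : ℝ) :
    ∫ t in a..b, Real.exp (-(a₀*t)) = (Real.exp (-(a₀*a)) - Real.exp (-(a₀*b))) / a₀ := by
  rw [intervalIntegral.integral_eq_sub_of_hasDerivAt (fun t _ => exp_antideriv a₀ ha₀ t)
    ((Real.continuous_exp.comp (by continuity)).intervalIntegrable _ _)]
  ring

lemma aux_fubini (T a₀ : ℝ) (hT : 0 ≤ T) (ha₀ : 0 < a₀) (φ : ℝ → ℝ)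
    (hφ : IntervalIntegrable φ volume 0 T) (hφ0 : ∀ s, 0 ≤ φ s) :
    a₀ * ∫ t in (0:ℝ)..T, Real.exp (-(a₀*t)) * ∫ s in (0:ℝ)..t, Real.exp (a₀*s) * φ s
      ≤ ∫ s in (0:ℝ)..T, φ s := by
  set μ := volume.restrict (Ioc (0:ℝ) T) with hμ
  haveI : IsFiniteMeasure μ := ⟨by
    rw [hμ, Measure.restrict_apply_univ]; exact measure_Ioc_lt_top⟩
  have hφμ : Integrable φ μ := (intervalIntegrable_iff_integrableOn_Ioc_of_le hT).1 hφ
  have hψ : IntervalIntegrable (fun s => Real.exp (a₀*s) * φ s) volume 0 T :=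
    hφ.continuousOn_mul (Real.continuous_exp.comp (by continuity)).continuousOn
  have hψμ : Integrable (fun s => Real.exp (a₀*s) * φ s) μ :=
    (intervalIntegrable_iff_integrableOn_Ioc_of_le hT).1 hψ
  have hexpμ : Integrable (fun t => Real.exp (-(a₀*t))) μ :=
    ((Real.continuous_exp.comp (by continuity)).intervalIntegrable 0 T
      |> (intervalIntegrable_iff_integrableOn_Ioc_of_le hT).1)
  set g : ℝ × ℝ → ℝ := fun p => Real.exp (-(a₀*p.1)) * (Real.exp (a₀*p.2) * φ p.2) with hgdef
  have hg : Integrable g (μ.prod μ) := hexpμ.mul_prod hψμ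
  set f : ℝ → ℝ → ℝ := fun t s => ({p : ℝ×ℝ | p.2 ≤ p.1}.indicator g) (t, s) with hfdef
  have hf : Integrable (Function.uncurry f) (μ.prod μ) := by
    have := hg.indicator (measurableSet_le measurable_snd measurable_fst)
    exact this
  have key1 : ∀ t ∈ Ioc (0:ℝ) T,
      Real.exp (-(a₀*t)) * (∫ s in (0:ℝ)..t, Real.exp (a₀*s) * φ s) = ∫ s, f t s ∂μ := by
    intro t ht
    have h1 : (fun s => f t s) = (Iic t).indicator (fun s => g (t, s)) := by
      funext s
      by_cases h : s ≤ t <;> simp [hfdef, Set.indicator_apply, h]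
    have hset : Iic t ∩ Ioc 0 T = Ioc 0 t := by
      ext s
      simp only [mem_inter_iff, mem_Iic, mem_Ioc]
      constructor
      · rintro ⟨h1, h2, h3⟩; exact ⟨h2, h1⟩
      · rintro ⟨h1, h2⟩; exact ⟨h2, h1, h2.trans ht.2⟩
    rw [h1, integral_indicator measurableSet_Iic, hμ, Measure.restrict_restrict measurableSet_Iic,
      hset, intervalIntegral.integral_of_le ht.1.le]
    rw [← integral_const_mul]
  have key2 : ∀ s ∈ Ioc (0:ℝ) T, a₀ * ∫ t, f t s ∂μ ≤ φ s := by
    intro s hs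
    have h1 : (fun t => f t s) = (Ici s).indicator (fun t => g (t, s)) := by
      funext t
      by_cases h : s ≤ t <;> simp [hfdef, Set.indicator_apply, h]
    have hset : Ici s ∩ Ioc 0 T = Icc s T := by
      ext t
      simp only [mem_inter_iff, mem_Ici, mem_Ioc, mem_Icc]
      constructor
      · rintro ⟨h1, h2, h3⟩; exact ⟨h1, h3⟩
      · rintro ⟨h1, h2⟩; exact ⟨h1, hs.1.trans_le h1, h2⟩
    have hexps : Real.exp (-(a₀*s)) * Real.exp (a₀*s) = 1 := by
      rw [← Real.exp_add]; simp
    have h2 : ∫ t, f t s ∂μ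
        = (∫ t in s..T, Real.exp (-(a₀*t))) * (Real.exp (a₀*s) * φ s) := by
      rw [h1, integral_indicator measurableSet_Ici, hμ,
        Measure.restrict_restrict measurableSet_Ici, hset,
        integral_Icc_eq_integral_Ioc, ← intervalIntegral.integral_of_le hs.2,
        ← intervalIntegral.integral_mul_const]
    rw [h2, exp_integral a₀ ha₀ s T]
    have e1 := Real.exp_pos (-(a₀*T))
    have e2 := Real.exp_pos (a₀*s)
    have e3 := hφ0 s
    have : a₀ * ((Real.exp (-(a₀*s)) - Real.exp (-(a₀*T))) / a₀ * (Real.exp (a₀*s) * φ s))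
        = (Real.exp (-(a₀*s)) - Real.exp (-(a₀*T))) * (Real.exp (a₀*s) * φ s) := by
      field_simp
    rw [this]
    have h4 : (Real.exp (-(a₀*s)) - Real.exp (-(a₀*T))) * (Real.exp (a₀*s) * φ s)
        = φ s - Real.exp (-(a₀*T)) * (Real.exp (a₀*s) * φ s) := by
      linear_combination (φ s) * hexps
    rw [h4]
    have h5 : 0 ≤ Real.exp (-(a₀*T)) * (Real.exp (a₀*s) * φ s) :=
      mul_nonneg e1.le (mul_nonneg e2.le e3)
    linarith
  calc a₀ * ∫ t in (0:ℝ)..T, Real.exp (-(a₀*t)) * ∫ s in (0:ℝ)..t, Real.exp (a₀*s) * φ s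
      = a₀ * ∫ t, ∫ s, f t s ∂μ ∂μ := by
        rw [intervalIntegral.integral_of_le hT]
        congr 1
        refine integral_congr_ae ?_
        filter_upwards [ae_restrict_mem measurableSet_Ioc] with t ht
        exact key1 t ht
    _ = a₀ * ∫ s, ∫ t, f t s ∂μ ∂μ := by rw [integral_integral_swap hf]
    _ = ∫ s, a₀ * ∫ t, f t s ∂μ ∂μ := (integral_const_mul _ _).symm
    _ ≤ ∫ s, φ s ∂μ := by
        refine integral_mono_ae ((hf.integral_prod_right).const_mul a₀) hφμ ?_
        filter_upwards [ae_restrict_mem measurableSet_Ioc] with s hs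
        exact key2 s hs
    _ = ∫ s in (0:ℝ)..T, φ s := (intervalIntegral.integral_of_le hT).symm

/-- Scalar damped-equation estimate, uniform in the damping coefficient `a₀` and the
time horizon `T`: if `u' + a₀u = F` on `[0,T]` with `F ∈ L¹(0,T)`, then
`sup_{[0,T]}|u| + a₀∫₀ᵀ|u| ≤ 2(|u(0)| + ∫₀ᵀ|F|)`. -/
theorem damped_ode_uniform_estimate (T a₀ : ℝ) (hT : 0 ≤ T) (ha₀ : 0 < a₀)
    (u F : ℝ → ℝ)
    (hu : ∀ t ∈ Icc (0:ℝ) T, HasDerivAt u (F t - a₀ * u t) t)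
    (hF : IntervalIntegrable F volume 0 T) :
    (⨆ t : Icc (0:ℝ) T, |u t.1|) + a₀ * ∫ t in (0:ℝ)..T, |u t|
      ≤ 2 * (|u 0| + ∫ t in (0:ℝ)..T, |F t|) := by
  have hucont : ContinuousOn u (Icc 0 T) := fun t ht =>
    (hu t ht).continuousAt.continuousWithinAt
  set G : ℝ → ℝ := fun t => ∫ s in (0:ℝ)..t, Real.exp (a₀*s) * |F s| with hGdef
  have hexpcont : Continuous fun s : ℝ => Real.exp (a₀*s) :=
    Real.continuous_exp.comp (by continuity)
  have hnexpcont : Continuous fun s : ℝ => Real.exp (-(a₀*s)) :=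
    Real.continuous_exp.comp (by continuity)
  have hGint : IntervalIntegrable (fun s => Real.exp (a₀*s) * |F s|) volume 0 T :=
    hF.abs.continuousOn_mul hexpcont.continuousOn
  have hGcont : ContinuousOn G (Icc 0 T) := by
    have h := intervalIntegral.continuousOn_primitive_interval
      (f := fun s => Real.exp (a₀*s) * |F s|) (a := (0:ℝ)) (b := T) (μ := volume) ?_
    · rwa [uIcc_of_le hT] at h
    · rw [uIcc_of_le hT, integrableOn_Icc_iff_integrableOn_Ioc]
      exact (intervalIntegrable_iff_integrableOn_Ioc_of_le hT).1 hGint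
  -- pointwise Duhamel bound
  have hptw : ∀ t ∈ Icc (0:ℝ) T, |u t| ≤ Real.exp (-(a₀*t)) * (|u 0| + G t) := by
    intro t ht
    have hv : ∀ x ∈ Icc (0:ℝ) T,
        HasDerivAt (fun y => Real.exp (a₀*y) * u y) (Real.exp (a₀*x) * F x) x := by
      intro x hx
      have he : HasDerivAt (fun y : ℝ => Real.exp (a₀*y)) (a₀ * Real.exp (a₀*x)) x := by
        have := ((hasDerivAt_id x).const_mul a₀).exp
        simpa [mul_comm] using this
      have := he.fun_mul (hu x hx)
      refine this.congr_deriv ?_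
      ring
    have hsub : uIcc (0:ℝ) t ⊆ uIcc (0:ℝ) T := by
      rw [uIcc_of_le ht.1, uIcc_of_le hT]
      exact Icc_subset_Icc_right ht.2
    have hFint : IntervalIntegrable (fun s => Real.exp (a₀*s) * F s) volume 0 t :=
      (hF.mono_set hsub).continuousOn_mul hexpcont.continuousOn
    have hFTC : ∫ s in (0:ℝ)..t, Real.exp (a₀*s) * F s
        = Real.exp (a₀*t) * u t - Real.exp (a₀*0) * u 0 :=
      intervalIntegral.integral_eq_sub_of_hasDerivAt
        (f := fun y => Real.exp (a₀*y) * u y) (f' := fun x => Real.exp (a₀*x) * F x)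
        (fun x hx => hv x (by
          rw [uIcc_of_le ht.1] at hx
          exact ⟨hx.1, hx.2.trans ht.2⟩)) hFint
    have hveq : Real.exp (a₀*t) * u t = u 0 + ∫ s in (0:ℝ)..t, Real.exp (a₀*s) * F s := by
      rw [hFTC]; simp
    have habs : |Real.exp (a₀*t) * u t| ≤ |u 0| + G t := by
      rw [hveq]
      refine (abs_add_le _ _).trans (add_le_add le_rfl ?_)
      refine (intervalIntegral.abs_integral_le_integral_abs ht.1).trans_eq ?_
      refine intervalIntegral.integral_congr fun s _ => ?_
      rw [abs_mul, abs_of_pos (Real.exp_pos _)]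
    have hmul : Real.exp (-(a₀*t)) * |Real.exp (a₀*t) * u t| = |u t| := by
      rw [abs_mul, abs_of_pos (Real.exp_pos _), ← mul_assoc, ← Real.exp_add]
      simp
    calc |u t| = Real.exp (-(a₀*t)) * |Real.exp (a₀*t) * u t| := hmul.symm
      _ ≤ Real.exp (-(a₀*t)) * (|u 0| + G t) :=
          mul_le_mul_of_nonneg_left habs (Real.exp_pos _).le
  set M : ℝ := |u 0| + ∫ s in (0:ℝ)..T, |F s| with hMdef
  -- sup bound
  have hsup_ptw : ∀ t ∈ Icc (0:ℝ) T, |u t| ≤ M := by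
    intro t ht
    refine (hptw t ht).trans ?_
    rw [mul_add, hMdef]
    have h1 : Real.exp (-(a₀*t)) * |u 0| ≤ |u 0| :=
      mul_le_of_le_one_left (abs_nonneg _)
        (Real.exp_le_one_iff.2 (by nlinarith [ht.1]))
    have h2 : Real.exp (-(a₀*t)) * G t ≤ ∫ s in (0:ℝ)..T, |F s| := by
      have he : Real.exp (-(a₀*t)) * G t
          = ∫ s in (0:ℝ)..t, Real.exp (-(a₀*t)) * (Real.exp (a₀*s) * |F s|) := by
        rw [hGdef, ← intervalIntegral.integral_const_mul]
      rw [he]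
      have hint1 : IntervalIntegrable
          (fun s => Real.exp (-(a₀*t)) * (Real.exp (a₀*s) * |F s|)) volume 0 t := by
        refine ((hGint.mono_set ?_).const_mul _)
        rw [uIcc_of_le ht.1, uIcc_of_le hT]; exact Icc_subset_Icc_right ht.2
      have hint2 : IntervalIntegrable (fun s => |F s|) volume 0 t := by
        refine hF.abs.mono_set ?_
        rw [uIcc_of_le ht.1, uIcc_of_le hT]; exact Icc_subset_Icc_right ht.2
      calc ∫ s in (0:ℝ)..t, Real.exp (-(a₀*t)) * (Real.exp (a₀*s) * |F s|)
          ≤ ∫ s in (0:ℝ)..t, |F s| := by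
            refine intervalIntegral.integral_mono_on ht.1 hint1 hint2 fun s hs => ?_
            rw [← mul_assoc, ← Real.exp_add]
            exact mul_le_of_le_one_left (abs_nonneg _)
              (Real.exp_le_one_iff.2 (by nlinarith [hs.2]))
        _ ≤ ∫ s in (0:ℝ)..T, |F s| := by
            refine intervalIntegral.integral_mono_interval le_rfl ht.1 ht.2 ?_ hF.abs
            filter_upwards with s using abs_nonneg _
    linarith
  have hsup : (⨆ t : Icc (0:ℝ) T, |u t.1|) ≤ M := by
    haveI : Nonempty (Icc (0:ℝ) T) := ⟨⟨0, left_mem_Icc.2 hT⟩⟩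
    exact ciSup_le fun t => hsup_ptw t.1 t.2
  -- integral bound
  have hb1int : IntervalIntegrable (fun t => Real.exp (-(a₀*t)) * |u 0|) volume 0 T :=
    ((hnexpcont.mul continuous_const).intervalIntegrable _ _)
  have hb2int : IntervalIntegrable (fun t => Real.exp (-(a₀*t)) * G t) volume 0 T := by
    refine ContinuousOn.intervalIntegrable ?_
    rw [uIcc_of_le hT]
    exact hnexpcont.continuousOn.mul hGcont
  have huint : IntervalIntegrable (fun t => |u t|) volume 0 T := by
    refine ContinuousOn.intervalIntegrable ?_
    rw [uIcc_of_le hT]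
    exact hucont.abs
  have hint : a₀ * ∫ t in (0:ℝ)..T, |u t| ≤ M := by
    have h1 : ∫ t in (0:ℝ)..T, |u t|
        ≤ ∫ t in (0:ℝ)..T, (Real.exp (-(a₀*t)) * |u 0| + Real.exp (-(a₀*t)) * G t) := by
      refine intervalIntegral.integral_mono_on hT huint (hb1int.add hb2int) fun t ht => ?_
      have := hptw t ht
      rw [mul_add] at this
      exact this
    have hsplit : ∫ t in (0:ℝ)..T, (Real.exp (-(a₀*t)) * |u 0| + Real.exp (-(a₀*t)) * G t)
        = (∫ t in (0:ℝ)..T, Real.exp (-(a₀*t)) * |u 0|)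
          + ∫ t in (0:ℝ)..T, Real.exp (-(a₀*t)) * G t :=
      intervalIntegral.integral_add hb1int hb2int
    have hterm1 : a₀ * ∫ t in (0:ℝ)..T, Real.exp (-(a₀*t)) * |u 0| ≤ |u 0| := by
      rw [intervalIntegral.integral_mul_const, exp_integral a₀ ha₀ 0 T]
      have e1 := Real.exp_pos (-(a₀*T))
      have h4 : a₀ * ((Real.exp (-(a₀*0)) - Real.exp (-(a₀*T))) / a₀ * |u 0|)
          = (1 - Real.exp (-(a₀*T))) * |u 0| := by
        rw [mul_zero, neg_zero, Real.exp_zero]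
        field_simp
      rw [h4]
      nlinarith [abs_nonneg (u 0)]
    have hterm2 : a₀ * ∫ t in (0:ℝ)..T, Real.exp (-(a₀*t)) * G t
        ≤ ∫ s in (0:ℝ)..T, |F s| :=
      aux_fubini T a₀ hT ha₀ (fun s => |F s|) hF.abs (fun s => abs_nonneg _)
    have hmono := mul_le_mul_of_nonneg_left h1 ha₀.le
    rw [hsplit, mul_add] at hmono
    rw [hMdef]
    linarith
  have hF0 : (0:ℝ) ≤ ∫ s in (0:ℝ)..T, |F s| :=
    intervalIntegral.integral_nonneg hT fun s _ => abs_nonneg _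
  linarith [hsup, hint]
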